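/- For a random variable X with continuous strictly increasing CDF, the minimum value of λ ↦ λ + (1/(1-α))·E[max(X − λ, 0)] equals the α-superquantile Q̄_α(X) = Q_α(X) + (1/(1-α))·E[max(X − Q_α(X), 0)]. -/

import Mathlib

open MeasureTheory Set Filter

/-!
For any `q`, pointwise `(X - l)⁺ ≥ (X - l) · 1_{X > q} = (X - q)⁺ - (l - q) · 1_{X > q}`; integrating,
`q` minimises `l ↦ l + c⁻¹ E[(X - l)⁺]` with `c = P(X > q)`. When the CDF is continuous and strictly
increasing, `F(Q_α) = α`, so `P(X > Q_α) = 1 - α`.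
-/

section

variable {Ω : Type*} [MeasurableSpace Ω] {μ : Measure Ω} {X : Ω → ℝ}

lemma integral_posPart_sub_le [IsFiniteMeasure μ] (hX : Integrable X μ) (q l : ℝ) :
    ∫ ω, max (X ω - q) 0 ∂μ - (l - q) * μ.real {ω | q < X ω} ≤ ∫ ω, max (X ω - l) 0 ∂μ := by
  set s := {ω | q < X ω}
  have hs : NullMeasurableSet s μ := nullMeasurableSet_lt aemeasurable_const hX.aemeasurable
  have hXl : Integrable (fun ω => X ω - l) μ := hX.sub (integrable_const l)
  have hpos : ∫ ω, max (X ω - q) 0 ∂μ = ∫ ω in s, (X ω - l) + (l - q) ∂μ := by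
    rw [← setIntegral_eq_integral_of_forall_compl_eq_zero (s := s) fun ω hω =>
      max_eq_right (sub_nonpos.2 (not_lt.1 hω))]
    refine setIntegral_congr_fun₀ hs fun ω hω => ?_
    simp only [max_eq_left (sub_pos.2 (show q < X ω from hω)).le]
    ring
  calc ∫ ω, max (X ω - q) 0 ∂μ - (l - q) * μ.real s
      = ∫ ω in s, (X ω - l) ∂μ := by
        rw [hpos, integral_add hXl.integrableOn (integrableOn_const (measure_ne_top μ s)),
          setIntegral_const, smul_eq_mul]
        ring
    _ ≤ ∫ ω in s, max (X ω - l) 0 ∂μ :=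
        setIntegral_mono hXl.integrableOn hXl.pos_part.integrableOn fun _ => le_max_left _ _
    _ ≤ ∫ ω, max (X ω - l) 0 ∂μ :=
        setIntegral_le_integral hXl.pos_part (ae_of_all _ fun _ => le_max_right _ _)

theorem isLeast_add_inv_mul_integral_posPart [IsFiniteMeasure μ] (hX : Integrable X μ) {q : ℝ}
    (hq : 0 < μ.real {ω | q < X ω}) :
    IsLeast (range fun l => l + (μ.real {ω | q < X ω})⁻¹ * ∫ ω, max (X ω - l) 0 ∂μ)
      (q + (μ.real {ω | q < X ω})⁻¹ * ∫ ω, max (X ω - q) 0 ∂μ) := by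
  refine ⟨⟨q, rfl⟩, ?_⟩
  rintro _ ⟨l, rfl⟩
  have key := integral_posPart_sub_le hX q l
  set c := μ.real {ω | q < X ω}
  calc q + c⁻¹ * ∫ ω, max (X ω - q) 0 ∂μ
      = l + c⁻¹ * (∫ ω, max (X ω - q) 0 ∂μ - (l - q) * c) := by field_simp; ring
    _ ≤ l + c⁻¹ * ∫ ω, max (X ω - l) 0 ∂μ := by gcongr

lemma cdf_map_eq_measureReal [IsProbabilityMeasure μ] (hX : AEMeasurable X μ) (x : ℝ) :
    ProbabilityTheory.cdf (μ.map X) x = μ.real {ω | X ω ≤ x} := by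
  have := Measure.isProbabilityMeasure_map hX
  rw [ProbabilityTheory.cdf_eq_real, map_measureReal_apply_of_aemeasurable hX measurableSet_Iic]
  rfl

lemma probReal_lt_eq_one_sub [IsProbabilityMeasure μ] (hX : AEMeasurable X μ) (q : ℝ) :
    μ.real {ω | q < X ω} = 1 - μ.real {ω | X ω ≤ q} := by
  rw [← probReal_compl_eq_one_sub₀ (nullMeasurableSet_le hX aemeasurable_const)]
  congr 1
  ext
  simp

end

lemma mem_range_cdf_of_continuous {μ : Measure ℝ} (hμ : Continuous (ProbabilityTheory.cdf μ))
    {α : ℝ} (hα : α ∈ Ioo (0 : ℝ) 1) : α ∈ range (ProbabilityTheory.cdf μ) := by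
  obtain ⟨a, ha⟩ :=
    ((ProbabilityTheory.tendsto_cdf_atBot μ).eventually (eventually_lt_nhds hα.1)).exists
  obtain ⟨b, hb⟩ :=
    ((ProbabilityTheory.tendsto_cdf_atTop μ).eventually (eventually_gt_nhds hα.2)).exists
  exact mem_range_of_exists_le_of_exists_ge hμ ⟨a, ha.le⟩ ⟨b, hb.le⟩

lemma csInf_setOf_le_eq_of_strictMono {α β : Type*} [ConditionallyCompleteLinearOrder α]
    [Preorder β] {F : α → β} (hF : StrictMono F) {z : α} :
    sInf {x | F z ≤ F x} = z := by
  simp only [hF.le_iff_le]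
  exact csInf_Ici

/-- For an integrable random variable `X` with continuous, strictly increasing CDF, the minimum
value of `λ ↦ λ + (1/(1-α))·E[max(X − λ, 0)]` equals the α-superquantile
`Q_α + (1/(1-α))·E[max(X − Q_α, 0)]`, where `Q_α = sInf {z | F z ≥ α}`. -/
theorem stmt2 {Ω : Type*} [MeasurableSpace Ω] (ℙ : Measure Ω) [IsProbabilityMeasure ℙ]
    (X : Ω → ℝ) (hX : Integrable X ℙ) (α : ℝ) (hα : α ∈ Ioo (0 : ℝ) 1)
    (F : ℝ → ℝ) (hF : ∀ x, F x = (ℙ {ω | X ω ≤ x}).toReal)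
    (hFc : Continuous F) (hFm : StrictMono F)
    (Q : ℝ) (hQ : Q = sInf {z : ℝ | α ≤ F z}) :
    sInf (Set.range fun lam : ℝ => lam + (1 - α)⁻¹ * ∫ ω, max (X ω - lam) 0 ∂ℙ) =
      Q + (1 - α)⁻¹ * ∫ ω, max (X ω - Q) 0 ∂ℙ := by
  have hcdf : F = ProbabilityTheory.cdf (ℙ.map X) :=
    funext fun x => (hF x).trans (cdf_map_eq_measureReal hX.aemeasurable x).symm
  obtain ⟨z, rfl⟩ : α ∈ range F := hcdf ▸ mem_range_cdf_of_continuous (hcdf ▸ hFc) hα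
  obtain rfl : Q = z := hQ.trans (csInf_setOf_le_eq_of_strictMono hFm)
  have htail : ℙ.real {ω | Q < X ω} = 1 - F Q := by
    rw [probReal_lt_eq_one_sub hX.aemeasurable, hF, measureReal_def]
  have hmin := isLeast_add_inv_mul_integral_posPart hX (htail ▸ sub_pos.2 hα.2)
  rw [htail] at hmin
  exact hmin.csInf_eq
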